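/- arXiv:2605.04687 — 4 statements merged into one kernel-verified Lean document; each statement's English description precedes it below -/
import Mathlib

section
/- For every fixed real p > 1, the map q ↦ λ_{p,q} is strictly increasing on (p, ∞). For every fixed real q > 1, the map p ↦ λ_{p,q} is strictly decreasing on (1, q). -/
/-!
Put `s = (p-1)/(q-p) > 0`. Then `(p-1)/(q-1) = s/(s+1)` and `(q-1)/(q-p) = s+1`, so
`λ_{p,q} = (s/(s+1))^s · (1 - s/(s+1)) = s^s / (s+1)^(s+1) = exp (s log s - (s+1) log (s+1))`.
The exponent has derivative `log s - log (s+1) < 0`, so `λ_{p,q}` is a strictly decreasing function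
of `s`; and `s` decreases in `q` and increases in `p`.
-/

open Real Set

lemma strictAntiOn_mul_log_sub_add_one_mul_log :
    StrictAntiOn (fun s : ℝ => s * log s - (s + 1) * log (s + 1)) (Ici 0) := by
  have hcont : Continuous fun s : ℝ => s * log s - (s + 1) * log (s + 1) :=
    continuous_mul_log.sub (continuous_mul_log.comp (continuous_add_const 1))
  refine strictAntiOn_of_deriv_neg (convex_Ici 0) hcont.continuousOn fun s hs => ?_
  rw [interior_Ici] at hs
  have hs : 0 < s := hs
  have hderiv : HasDerivAt (fun s : ℝ => s * log s - (s + 1) * log (s + 1))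
      (log s - log (s + 1)) s := by
    refine ((hasDerivAt_mul_log hs.ne').sub ((hasDerivAt_mul_log (by positivity : s + 1 ≠ 0)).comp
      s ((hasDerivAt_id s).add_const 1))).congr_deriv ?_
    ring
  rw [hderiv.deriv, sub_neg]
  exact log_lt_log hs (lt_add_one s)

lemma div_add_one_rpow_sub_rpow_add_one {s : ℝ} (hs : 0 < s) :
    (s / (s + 1)) ^ s - (s / (s + 1)) ^ (s + 1) = exp (s * log s - (s + 1) * log (s + 1)) := by
  have hs1 : 0 < s + 1 := by positivity
  have ht : 0 < s / (s + 1) := by positivity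
  calc (s / (s + 1)) ^ s - (s / (s + 1)) ^ (s + 1)
      = (s / (s + 1)) ^ s * (s + 1)⁻¹ := by rw [rpow_add_one ht.ne']; field_simp; ring
    _ = exp ((log s - log (s + 1)) * s) * exp (-log (s + 1)) := by
      rw [rpow_def_of_pos ht, log_div hs.ne' hs1.ne', exp_neg, exp_log hs1]
    _ = exp (s * log s - (s + 1) * log (s + 1)) := by rw [← exp_add]; ring_nf

lemma strictAntiOn_div_add_one_rpow_sub_rpow_add_one :
    StrictAntiOn (fun s : ℝ => (s / (s + 1)) ^ s - (s / (s + 1)) ^ (s + 1)) (Ioi 0) :=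
  (exp_strictMono.comp_strictAntiOn
      (strictAntiOn_mul_log_sub_add_one_mul_log.mono Ioi_subset_Ici_self)).congr
    fun _ hs => (div_add_one_rpow_sub_rpow_add_one hs).symm

lemma lambda_eq_of_one_lt_of_lt {p q : ℝ} (hp : 1 < p) (hpq : p < q) :
    ((p-1)/(q-1)) ^ ((p-1)/(q-p)) - ((p-1)/(q-1)) ^ ((q-1)/(q-p))
      = (fun s : ℝ => (s / (s + 1)) ^ s - (s / (s + 1)) ^ (s + 1)) ((p-1)/(q-p)) := by
  have hqp : q - p ≠ 0 := by linarith
  have hq1 : q - 1 ≠ 0 := by linarith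
  have hsucc : (p-1)/(q-p) + 1 = (q-1)/(q-p) := by field_simp; ring
  have hratio : (p-1)/(q-p) / ((q-1)/(q-p)) = (p-1)/(q-1) := by field_simp
  simp only [hsucc, hratio]

/-- For every fixed real `p > 1`, the map `q ↦ λ_{p,q}` is strictly increasing on `(p, ∞)`;
for every fixed real `q > 1`, the map `p ↦ λ_{p,q}` is strictly decreasing on `(1, q)`.
Here `λ_{p,q} = ((p-1)/(q-1))^((p-1)/(q-p)) - ((p-1)/(q-1))^((q-1)/(q-p))`. -/
theorem stmt4 :
    (∀ p : ℝ, 1 < p → StrictMonoOn (fun q : ℝ =>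
        ((p-1)/(q-1)) ^ ((p-1)/(q-p)) - ((p-1)/(q-1)) ^ ((q-1)/(q-p))) (Set.Ioi p)) ∧
    (∀ q : ℝ, 1 < q → StrictAntiOn (fun p : ℝ =>
        ((p-1)/(q-1)) ^ ((p-1)/(q-p)) - ((p-1)/(q-1)) ^ ((q-1)/(q-p))) (Set.Ioo 1 q)) := by
  constructor
  · intro p hp
    have hanti : StrictAntiOn (fun q : ℝ => (p-1)/(q-p)) (Ioi p) := fun q₁ hq₁ q₂ hq₂ hlt =>
      div_lt_div_of_pos_left (by linarith) (sub_pos.2 hq₁) (by linarith)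
    have hmaps : MapsTo (fun q : ℝ => (p-1)/(q-p)) (Ioi p) (Ioi 0) := fun q (hq : p < q) =>
      show 0 < (p-1)/(q-p) from div_pos (by linarith) (by linarith)
    exact (strictAntiOn_div_add_one_rpow_sub_rpow_add_one.comp hanti hmaps).congr
      fun q hq => (lambda_eq_of_one_lt_of_lt hp hq).symm
  · intro q _
    have hmono : StrictMonoOn (fun p : ℝ => (p-1)/(q-p)) (Ioo 1 q) := fun p₁ hp₁ p₂ hp₂ hlt => by
      rw [div_lt_div_iff₀ (by linarith [hp₁.2]) (by linarith [hp₂.2])]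
      nlinarith
    have hmaps : MapsTo (fun p : ℝ => (p-1)/(q-p)) (Ioo 1 q) (Ioi 0) := fun p ⟨hp1, hpq⟩ =>
      show 0 < (p-1)/(q-p) from div_pos (by linarith) (by linarith)
    exact (strictAntiOn_div_add_one_rpow_sub_rpow_add_one.comp_strictMonoOn hmono hmaps).congr
      fun p hp => (lambda_eq_of_one_lt_of_lt hp.1 hp.2).symm
end

section
/- Let 1 < p < q be real numbers and let λ be a real number with -λ_{p,q} < λ < 0. Then there exists r ∈ (1, p) such that λ_{r,p} < λ_{r,q} + λ. -/
/-!
Writing `x = (r-1)/(p-1)`, one has `λ_{r,p} = x^((r-1)/(p-r)) (1 - x) ≤ (p-r)/(p-1)`, so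
`λ_{r,p} → 0` as `r → p⁻`, while `λ_{r,q} → λ_{p,q}` by continuity. Hence
`λ_{r,q} + λ - λ_{r,p} → λ_{p,q} + λ > 0`, and any `r` close enough to `p` from below works.
-/

/-- For real exponents `1 < a < b`,
`λ_{a,b} = ((a-1)/(b-1))^((a-1)/(b-a)) - ((a-1)/(b-1))^((b-1)/(b-a))`. -/
noncomputable def lamPQ (a b : ℝ) : ℝ :=
  ((a-1)/(b-1)) ^ ((a-1)/(b-a)) - ((a-1)/(b-1)) ^ ((b-1)/(b-a))

open Filter Topology

lemma lamPQ_eq_rpow_mul {a b : ℝ} (ha : 1 < a) (hab : a < b) :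
    lamPQ a b = ((a - 1) / (b - 1)) ^ ((a - 1) / (b - a)) * ((b - a) / (b - 1)) := by
  have hx : 0 < (a - 1) / (b - 1) := div_pos (by linarith) (by linarith)
  have hexp : (b - 1) / (b - a) = (a - 1) / (b - a) + 1 := by
    field_simp [(by linarith : b - a ≠ 0)]; ring
  have hone_sub : 1 - (a - 1) / (b - 1) = (b - a) / (b - 1) := by
    field_simp [(by linarith : b - 1 ≠ 0)]; ring
  rw [lamPQ, hexp, Real.rpow_add hx, Real.rpow_one, ← hone_sub]
  ring

lemma lamPQ_nonneg {a b : ℝ} (ha : 1 < a) (hab : a < b) : 0 ≤ lamPQ a b := by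
  rw [lamPQ_eq_rpow_mul ha hab]
  exact mul_nonneg (Real.rpow_nonneg (div_pos (by linarith) (by linarith)).le _)
    (div_nonneg (by linarith) (by linarith))

lemma lamPQ_le_div {a b : ℝ} (ha : 1 < a) (hab : a < b) :
    lamPQ a b ≤ (b - a) / (b - 1) := by
  have hx : 0 < (a - 1) / (b - 1) := div_pos (by linarith) (by linarith)
  have hx_le : (a - 1) / (b - 1) ≤ 1 := (div_le_one (by linarith)).2 (by linarith)
  rw [lamPQ_eq_rpow_mul ha hab]
  exact mul_le_of_le_one_left (div_nonneg (by linarith) (by linarith))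
    (Real.rpow_le_one hx.le hx_le (div_nonneg (by linarith) (by linarith)))

lemma eventually_one_lt_and_lt_nhdsLT {b : ℝ} (hb : 1 < b) :
    ∀ᶠ a in 𝓝[<] b, 1 < a ∧ a < b :=
  (eventually_nhdsWithin_of_eventually_nhds (lt_mem_nhds hb)).and self_mem_nhdsWithin

lemma tendsto_lamPQ_left_nhdsLT {b : ℝ} (hb : 1 < b) :
    Tendsto (fun a => lamPQ a b) (𝓝[<] b) (𝓝 0) := by
  have hbound : Tendsto (fun a => (b - a) / (b - 1)) (𝓝[<] b) (𝓝 0) := by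
    have : Tendsto (fun a => (b - a) / (b - 1)) (𝓝 b) (𝓝 ((b - b) / (b - 1))) :=
      (continuous_const.sub continuous_id).div_const _ |>.tendsto b
    simpa using this.mono_left nhdsWithin_le_nhds
  have hmem := eventually_one_lt_and_lt_nhdsLT hb
  exact tendsto_of_tendsto_of_tendsto_of_le_of_le' tendsto_const_nhds hbound
    (hmem.mono fun a ha => lamPQ_nonneg ha.1 ha.2)
    (hmem.mono fun a ha => lamPQ_le_div ha.1 ha.2)

lemma continuousAt_lamPQ_left {a b : ℝ} (ha : 1 < a) (hab : a < b) :
    ContinuousAt (fun r => lamPQ r b) a := by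
  have hbase : ContinuousAt (fun r : ℝ => (r - 1) / (b - 1)) a := by fun_prop
  have hbase_ne : (a - 1) / (b - 1) ≠ 0 := (div_pos (by linarith) (by linarith)).ne'
  have hexp (f : ℝ → ℝ) (hf : ContinuousAt f a) : ContinuousAt (fun r => f r / (b - r)) a :=
    hf.div (by fun_prop) (sub_ne_zero.2 hab.ne')
  exact (hbase.rpow (hexp _ (by fun_prop)) (.inl hbase_ne)).sub
    (hbase.rpow (hexp _ continuousAt_const) (.inl hbase_ne))

theorem stmt5_general (p q lam : ℝ) (hp : 1 < p) (hpq : p < q)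
    (hlam1 : -lamPQ p q < lam) :
    ∃ r : ℝ, 1 < r ∧ r < p ∧ lamPQ r p < lamPQ r q + lam := by
  have hlim : Tendsto (fun r => lamPQ r q + lam - lamPQ r p) (𝓝[<] p)
      (𝓝 (lamPQ p q + lam - 0)) :=
    (((continuousAt_lamPQ_left hp hpq).tendsto.mono_left nhdsWithin_le_nhds).add_const lam).sub
      (tendsto_lamPQ_left_nhdsLT hp)
  have hpos : ∀ᶠ r in 𝓝[<] p, 0 < lamPQ r q + lam - lamPQ r p :=
    hlim.eventually (lt_mem_nhds (by linarith))
  obtain ⟨r, ⟨hr_gt, hr_lt⟩, hr⟩ := ((eventually_one_lt_and_lt_nhdsLT hp).and hpos).exists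
  exact ⟨r, hr_gt, hr_lt, by linarith⟩

/-- Let `1 < p < q` be real and let `λ` satisfy `-λ_{p,q} < λ < 0`. Then there exists
`r ∈ (1, p)` such that `λ_{r,p} < λ_{r,q} + λ`. -/
theorem stmt5 (p q lam : ℝ) (hp : 1 < p) (hpq : p < q)
    (hlam1 : -lamPQ p q < lam) (hlam2 : lam < 0) :
    ∃ r : ℝ, 1 < r ∧ r < p ∧ lamPQ r p < lamPQ r q + lam :=
  stmt5_general p q lam hp hpq hlam1
end

section
/- Let N ≥ 3 be an integer, let 0 < q < 1 < p be reals, let λ ∈ ℝ, let R > 0, and set γ = 2/(1-q) (so γ > 2). Then there exists ε₀ > 0 such that for every ε ∈ (0, ε₀) and every r ∈ (0, R], ε γ (γ-1) r^{γ-2} + (N-1) ε γ r^{γ-1} · (cosh r / sinh r) + λ ε r^{γ} + (ε r^{γ})^{p} - (ε r^{γ})^{q} ≤ 0. Equivalently, the radial function V(r) = ε r^{γ} satisfies -V''(r) - (N-1) coth(r) V'(r) - λ V(r) - V(r)^{p} + V(r)^{q} ≥ 0 on (0, R]. -/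
/-!
Since `γ q = γ - 2`, every term of the expression is `r ^ (γ - 2)` times a bracket
`ε (γ (γ - 1) + (N - 1) γ r coth r + λ r²) + ε ^ p r ^ (γ (p - 1) + 2) - ε ^ q`.
On `(0, R]` we have `r coth r ≤ r + 1 ≤ R + 1`, so the bracket is at most
`ε M + ε ^ p K - ε ^ q` with `M, K` depending only on the data, and this is negative for small
`ε` because `q < 1` and `q < p`.
-/

open Real Filter Topology

theorem Real.mul_cosh_le_add_one_mul_sinh {r : ℝ} (hr : 0 ≤ r) :
    r * cosh r ≤ (r + 1) * sinh r := by
  have hexp : exp (-r) ≤ 1 := exp_le_one_iff.2 (neg_nonpos.2 hr)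
  have hsinh : r ≤ sinh r := self_le_sinh_iff.2 hr
  calc r * cosh r = r * sinh r + r * exp (-r) := by rw [← cosh_sub_sinh]; ring
    _ ≤ r * sinh r + r := by nlinarith
    _ ≤ (r + 1) * sinh r := by linarith

theorem Real.mul_coth_le_add_one {r : ℝ} (hr : 0 < r) : r * (cosh r / sinh r) ≤ r + 1 := by
  rw [mul_div_assoc', div_le_iff₀ (sinh_pos_iff.2 hr)]
  exact mul_cosh_le_add_one_mul_sinh hr.le

theorem eventually_mul_add_rpow_mul_le_rpow {p q : ℝ} (hq : q < 1) (hpq : q < p) (M K : ℝ) :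
    ∀ᶠ ε in 𝓝[>] (0 : ℝ), ε * M + ε ^ p * K ≤ ε ^ q := by
  have hlim : Tendsto (fun ε : ℝ => ε ^ (1 - q) * M + ε ^ (p - q) * K) (𝓝[>] 0) (𝓝 0) := by
    have hcont : ContinuousAt (fun ε : ℝ => ε ^ (1 - q) * M + ε ^ (p - q) * K) 0 :=
      ((continuousAt_rpow_const 0 _ (Or.inr (by linarith))).mul continuousAt_const).add
        ((continuousAt_rpow_const 0 _ (Or.inr (by linarith))).mul continuousAt_const)
    simpa [zero_rpow (sub_ne_zero.2 hq.ne'), zero_rpow (sub_ne_zero.2 hpq.ne')]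
      using hcont.tendsto.mono_left nhdsWithin_le_nhds
  filter_upwards [self_mem_nhdsWithin, hlim.eventually (ge_mem_nhds one_pos)]
    with ε (hε : 0 < ε) hsmall
  calc ε * M + ε ^ p * K = ε ^ q * (ε ^ (1 - q) * M + ε ^ (p - q) * K) := by
        rw [mul_add, ← mul_assoc, ← mul_assoc, ← rpow_add hε, ← rpow_add hε]
        simp only [add_sub_cancel, rpow_one]
    _ ≤ ε ^ q * 1 := mul_le_mul_of_nonneg_left hsmall (rpow_nonneg hε.le q)
    _ = ε ^ q := mul_one _

section RadialPower

variable {γ p q c lam ε r R : ℝ}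

theorem radial_expr_eq_rpow_mul (hγq : γ * q = γ - 2) (hε : 0 ≤ ε) (hr : 0 < r) :
    ε * γ * (γ - 1) * r ^ (γ - 2) + c * ε * γ * r ^ (γ - 1) * (cosh r / sinh r)
        + lam * ε * r ^ γ + (ε * r ^ γ) ^ p - (ε * r ^ γ) ^ q
      = r ^ (γ - 2) * (ε * (γ * (γ - 1) + c * γ * (r * (cosh r / sinh r)) + lam * r ^ 2)
          + ε ^ p * r ^ (γ * (p - 1) + 2) - ε ^ q) := by
  have h1 : r ^ (γ - 1) = r ^ (γ - 2) * r := by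
    rw [show γ - 1 = γ - 2 + 1 by ring, rpow_add hr, rpow_one]
  have h2 : r ^ γ = r ^ (γ - 2) * r ^ 2 := by
    rw [← rpow_two, ← rpow_add hr, sub_add_cancel]
  have hp : (ε * r ^ γ) ^ p = ε ^ p * (r ^ (γ - 2) * r ^ (γ * (p - 1) + 2)) := by
    rw [mul_rpow hε (rpow_nonneg hr.le _), ← rpow_mul hr.le, ← rpow_add hr]; ring_nf
  have hq : (ε * r ^ γ) ^ q = ε ^ q * r ^ (γ - 2) := by
    rw [mul_rpow hε (rpow_nonneg hr.le _), ← rpow_mul hr.le, hγq]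
  rw [hp, hq, h1, h2]
  ring

theorem radial_bracket_le (ha : 0 ≤ γ * (p - 1) + 2) (hε : 0 ≤ ε) (hr : 0 < r) (hrR : r ≤ R) :
    ε * (γ * (γ - 1) + c * γ * (r * (cosh r / sinh r)) + lam * r ^ 2)
        + ε ^ p * r ^ (γ * (p - 1) + 2) - ε ^ q
      ≤ ε * (γ * (γ - 1) + |c * γ| * (R + 1) + |lam| * R ^ 2)
        + ε ^ p * R ^ (γ * (p - 1) + 2) - ε ^ q := by
  have hcoth_nonneg : 0 ≤ r * (cosh r / sinh r) :=
    (mul_pos hr (div_pos (cosh_pos r) (sinh_pos_iff.2 hr))).le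
  have hcoth : c * γ * (r * (cosh r / sinh r)) ≤ |c * γ| * (R + 1) :=
    calc c * γ * (r * (cosh r / sinh r)) ≤ |c * γ| * (r * (cosh r / sinh r)) :=
          mul_le_mul_of_nonneg_right (le_abs_self _) hcoth_nonneg
      _ ≤ |c * γ| * (R + 1) :=
          mul_le_mul_of_nonneg_left ((mul_coth_le_add_one hr).trans (by linarith)) (abs_nonneg _)
  have hlam : lam * r ^ 2 ≤ |lam| * R ^ 2 :=
    mul_le_mul (le_abs_self _) (pow_le_pow_left₀ hr.le hrR 2) (sq_nonneg _) (abs_nonneg _)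
  have hpow : r ^ (γ * (p - 1) + 2) ≤ R ^ (γ * (p - 1) + 2) := rpow_le_rpow hr.le hrR ha
  gcongr ε * ?_ + ε ^ p * ?_ - _
  linarith

end RadialPower

theorem stmt6_general (N : ℕ) (p q lam R : ℝ)
    (hq1 : q < 1) (hp : 1 < p) :
    ∃ ε₀ : ℝ, 0 < ε₀ ∧ ∀ ε : ℝ, 0 < ε → ε < ε₀ → ∀ r : ℝ, 0 < r → r ≤ R →
      ε * (2/(1-q)) * (2/(1-q) - 1) * r ^ (2/(1-q) - 2)
        + ((N : ℝ) - 1) * ε * (2/(1-q)) * r ^ (2/(1-q) - 1) * (Real.cosh r / Real.sinh r)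
        + lam * ε * r ^ (2/(1-q))
        + (ε * r ^ (2/(1-q))) ^ p - (ε * r ^ (2/(1-q))) ^ q ≤ 0 := by
  set γ := 2 / (1 - q)
  have hγ : 0 < γ := div_pos two_pos (sub_pos.2 hq1)
  have hγq : γ * q = γ - 2 := by
    have : γ * (1 - q) = 2 := div_mul_cancel₀ _ (sub_pos.2 hq1).ne'
    linarith
  have ha : 0 ≤ γ * (p - 1) + 2 := by linarith [mul_pos hγ (sub_pos.2 hp)]
  obtain ⟨ε₀, hε₀, hsmall⟩ := (nhdsGT_basis (0 : ℝ)).eventually_iff.1 <|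
    eventually_mul_add_rpow_mul_le_rpow hq1 (hq1.trans hp)
      (γ * (γ - 1) + |((N : ℝ) - 1) * γ| * (R + 1) + |lam| * R ^ 2) (R ^ (γ * (p - 1) + 2))
  refine ⟨ε₀, hε₀, fun ε hε hεε₀ r hr hrR => ?_⟩
  rw [radial_expr_eq_rpow_mul hγq hε.le hr]
  exact mul_nonpos_of_nonneg_of_nonpos (rpow_nonneg hr.le _)
    ((radial_bracket_le ha hε.le hr hrR).trans (sub_nonpos.2 (hsmall ⟨hε, hεε₀⟩)))

/-- Let `N ≥ 3`, `0 < q < 1 < p`, `λ ∈ ℝ`, `R > 0`, and `γ = 2/(1-q)`. Then there is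
`ε₀ > 0` such that for all `ε ∈ (0, ε₀)` and `r ∈ (0, R]`,
`εγ(γ-1) r^(γ-2) + (N-1) εγ r^(γ-1) coth r + λ ε r^γ + (ε r^γ)^p - (ε r^γ)^q ≤ 0`,
i.e. `V(r) = ε r^γ` is a radial supersolution of `-Δ_{𝔹^N} V - λV = V^p - V^q`
on the geodesic ball of radius `R`. -/
theorem stmt6 (N : ℕ) (hN : 3 ≤ N) (p q lam R : ℝ)
    (hq0 : 0 < q) (hq1 : q < 1) (hp : 1 < p) (hR : 0 < R) :
    ∃ ε₀ : ℝ, 0 < ε₀ ∧ ∀ ε : ℝ, 0 < ε → ε < ε₀ → ∀ r : ℝ, 0 < r → r ≤ R →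
      ε * (2/(1-q)) * (2/(1-q) - 1) * r ^ (2/(1-q) - 2)
        + ((N : ℝ) - 1) * ε * (2/(1-q)) * r ^ (2/(1-q) - 1) * (Real.cosh r / Real.sinh r)
        + lam * ε * r ^ (2/(1-q))
        + (ε * r ^ (2/(1-q))) ^ p - (ε * r ^ (2/(1-q))) ^ q ≤ 0 :=
  stmt6_general N p q lam R hq1 hp
end

section
/- Let N ≥ 3 be an integer and let γ ∈ (-1, 0) be a real number. Then there exists a constant C > 0, depending only on N and γ, such that for every x in the closed Euclidean unit ball of ℝ^N and every r ∈ (0, 2], ∫_{B(x,r) ∩ B(0,1)} (1 - |y|)^{γ} dy ≤ C r^{N+γ}, where B(z,ρ) denotes the open Euclidean ball of center z and radius ρ in ℝ^N and the integral is with respect to Lebesgue measure. -/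
/-!
The integrand blows up only at the unit sphere, so split `B(x, r) ∩ B(0, 1)` according to the
dyadic size of `1 - |y|`. The geometric input is that the part of `B(x, r)` within distance
`δ ≤ r` of the sphere has volume `≤ K δ r^(N-1)`: for `r > 1/4` bound it by the whole annulus,
whose volume is `≤ N δ |B(0, 1)|`; for small `r`, rotate `x` onto the first axis, where every line
parallel to that axis meets the set in a segment of length `≤ 4δ` and only lines through a cube of
side `2r` meet it at all. The dyadic pieces then contribute a geometric series of ratio
`2^(-(1+γ)) < 1`, which is where `γ > -1` enters.
-/

open MeasureTheory Metric Set

lemma exists_dyadic_shell {u D : ℝ} (hu : 0 < u) (huD : u ≤ D) :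
    ∃ k : ℕ, D / 2 ^ (k + 1) < u ∧ u ≤ D / 2 ^ k := by
  obtain ⟨k, hk, hk'⟩ := exists_nat_pow_near ((one_le_div hu).2 huD) one_lt_two
  refine ⟨k, ?_, ?_⟩
  · rw [div_lt_iff₀ (by positivity), mul_comm]; exact (div_lt_iff₀ hu).1 hk'
  · rw [le_div_iff₀ (by positivity), mul_comm]; exact (le_div_iff₀ hu).1 hk

lemma rpow_div_two_pow_mul {D γ : ℝ} (hD : 0 < D) (k : ℕ) :
    (D / 2 ^ (k + 1)) ^ γ * (D / 2 ^ k) = D ^ (1 + γ) * 2 ^ (-γ) * (2 ^ (-(1 + γ))) ^ k := by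
  have h2 : (2 : ℝ) ^ (-γ) = 2 ^ (-(1 + γ)) * 2 := by
    rw [← Real.rpow_add_one two_ne_zero]; ring_nf
  rw [div_eq_mul_inv, Real.mul_rpow hD.le (by positivity), Real.inv_rpow (by positivity),
    ← Real.rpow_pow_comm zero_le_two, ← inv_pow, ← Real.rpow_neg zero_le_two,
    Real.rpow_add hD, Real.rpow_one, h2]
  field_simp
  ring

section Dyadic

variable {α : Type*} [MeasurableSpace α] {μ : Measure α} {s : Set α} {u : α → ℝ} {γ : ℝ}

lemma setLIntegral_rpow_le_of_le {a : ℝ} (hs : MeasurableSet s) (hγ : γ ≤ 0) (ha : 0 < a)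
    (h : ∀ y ∈ s, a ≤ u y) :
    ∫⁻ y in s, ENNReal.ofReal (u y ^ γ) ∂μ ≤ ENNReal.ofReal (a ^ γ) * μ s :=
  (setLIntegral_mono' hs fun y hy ↦
    ENNReal.ofReal_le_ofReal (Real.rpow_le_rpow_of_nonpos ha (h y hy) hγ)).trans_eq
    (setLIntegral_const _ _)

theorem setLIntegral_rpow_le_of_measure_sublevel_le {D K : ℝ} (hs : MeasurableSet s)
    (hu : Measurable u) (hγ : -1 < γ) (hγ0 : γ ≤ 0) (hD : 0 < D) (hK : 0 ≤ K)
    (hpos : ∀ y ∈ s, 0 < u y)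
    (hlevel : ∀ δ, 0 < δ → δ ≤ D → μ (s ∩ {y | u y ≤ δ}) ≤ ENNReal.ofReal (K * δ)) :
    ∫⁻ y in s, ENNReal.ofReal (u y ^ γ) ∂μ ≤ ENNReal.ofReal (D ^ γ) * μ s +
      ENNReal.ofReal (K * D ^ (1 + γ) * (2 ^ (-γ) / (1 - 2 ^ (-(1 + γ))))) := by
  set ρ : ℝ := 2 ^ (-(1 + γ)) with hρ_def
  have hρ : ρ < 1 := Real.rpow_lt_one_of_one_lt_of_neg one_lt_two (by linarith)
  have hρ0 : 0 ≤ ρ := by positivity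
  set shell : ℕ → Set α := fun k ↦ s ∩ {y | D / 2 ^ (k + 1) < u y ∧ u y ≤ D / 2 ^ k}
  have hcover : s ⊆ {y ∈ s | D < u y} ∪ ⋃ k, shell k := by
    intro y hy
    rcases lt_or_ge D (u y) with h | h
    · exact Or.inl ⟨hy, h⟩
    · obtain ⟨k, hk⟩ := exists_dyadic_shell (hpos y hy) h
      exact Or.inr (mem_iUnion.2 ⟨k, hy, hk⟩)
  have hfar : ∫⁻ y in {y ∈ s | D < u y}, ENNReal.ofReal (u y ^ γ) ∂μ ≤
      ENNReal.ofReal (D ^ γ) * μ s :=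
    (setLIntegral_rpow_le_of_le (hs.inter (measurableSet_lt measurable_const hu)) hγ0 hD
      fun y hy ↦ hy.2.le).trans (by gcongr; exact inter_subset_left)
  have hshell (k : ℕ) : ∫⁻ y in shell k, ENNReal.ofReal (u y ^ γ) ∂μ ≤
      ENNReal.ofReal (ρ ^ k * (K * D ^ (1 + γ) * 2 ^ (-γ))) := by
    have hδ : 0 < D / 2 ^ k := by positivity
    calc ∫⁻ y in shell k, ENNReal.ofReal (u y ^ γ) ∂μ
        ≤ ENNReal.ofReal ((D / 2 ^ (k + 1)) ^ γ) * μ (shell k) :=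
          setLIntegral_rpow_le_of_le (hs.inter ((measurableSet_lt measurable_const hu).inter
            (measurableSet_le hu measurable_const))) hγ0 (by positivity) fun y hy ↦ hy.2.1.le
      _ ≤ ENNReal.ofReal ((D / 2 ^ (k + 1)) ^ γ) * ENNReal.ofReal (K * (D / 2 ^ k)) := by
          gcongr
          refine (measure_mono (inter_subset_inter_right s fun y (hy : _ ∧ _) ↦ hy.2)).trans
            (hlevel _ hδ ?_)
          exact div_le_self hD.le (one_le_pow₀ one_le_two)
      _ = ENNReal.ofReal (ρ ^ k * (K * D ^ (1 + γ) * 2 ^ (-γ))) := by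
          rw [← ENNReal.ofReal_mul (by positivity), mul_left_comm, rpow_div_two_pow_mul hD, hρ_def]
          congr 1
          ring
  calc ∫⁻ y in s, ENNReal.ofReal (u y ^ γ) ∂μ
      ≤ ∫⁻ y in {y ∈ s | D < u y} ∪ ⋃ k, shell k, ENNReal.ofReal (u y ^ γ) ∂μ :=
        lintegral_mono_set hcover
    _ ≤ ∫⁻ y in {y ∈ s | D < u y}, ENNReal.ofReal (u y ^ γ) ∂μ +
          ∑' k, ∫⁻ y in shell k, ENNReal.ofReal (u y ^ γ) ∂μ :=
        (lintegral_union_le _ _ _).trans (by gcongr; exact lintegral_iUnion_le _ _)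
    _ ≤ ENNReal.ofReal (D ^ γ) * μ s +
          ∑' k, ENNReal.ofReal (ρ ^ k * (K * D ^ (1 + γ) * 2 ^ (-γ))) :=
        add_le_add hfar (ENNReal.tsum_le_tsum hshell)
    _ = ENNReal.ofReal (D ^ γ) * μ s +
          ENNReal.ofReal (K * D ^ (1 + γ) * (2 ^ (-γ) / (1 - ρ))) := by
        rw [← ENNReal.ofReal_tsum_of_nonneg (fun k ↦ by positivity)
          ((summable_geometric_of_lt_one hρ0 hρ).mul_right _), tsum_mul_right,
          tsum_geometric_of_lt_one hρ0 hρ]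
        congr 2
        ring

end Dyadic

lemma measure_prod_le_of_fiber_le {α β : Type*} [MeasurableSpace α] [MeasurableSpace β]
    {μ : Measure α} {ν : Measure β} [SFinite μ] [SFinite ν] {A : Set (α × β)} {B : Set β}
    {L : ENNReal} (hA : MeasurableSet A) (hB : MeasurableSet B) (hAB : ∀ p ∈ A, p.2 ∈ B)
    (hfiber : ∀ z, μ ((fun t ↦ (t, z)) ⁻¹' A) ≤ L) :
    μ.prod ν A ≤ L * ν B := by
  rw [Measure.prod_apply_symm hA, ← lintegral_indicator_const hB]
  refine lintegral_mono fun z ↦ ?_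
  by_cases hz : z ∈ B
  · simpa [hz] using hfiber z
  · have : (fun t ↦ (t, z)) ⁻¹' A = ∅ := eq_empty_of_forall_notMem fun t ht ↦ hz (hAB _ ht)
    simp [this]

def consEquiv (n : ℕ) : ℝ × (Fin n → ℝ) ≃ᵐ EuclideanSpace ℝ (Fin (n + 1)) :=
  (MeasurableEquiv.piFinSuccAbove (fun _ ↦ ℝ) 0).symm.trans (MeasurableEquiv.toLp 2 _)

lemma volume_preserving_consEquiv (n : ℕ) : MeasurePreserving (consEquiv n) :=
  (PiLp.volume_preserving_toLp _).comp (volume_preserving_piFinSuccAbove _ 0).symm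

lemma norm_consEquiv_sub_sq (n : ℕ) (t c : ℝ) (z : Fin n → ℝ) :
    ‖consEquiv n (t, z) - c • EuclideanSpace.single 0 1‖ ^ 2 = (t - c) ^ 2 + ∑ i, z i ^ 2 := by
  rw [EuclideanSpace.norm_sq_eq, Fin.sum_univ_succ]
  simp [consEquiv, Fin.succ_ne_zero]

lemma norm_consEquiv_sq (n : ℕ) (t : ℝ) (z : Fin n → ℝ) :
    ‖consEquiv n (t, z)‖ ^ 2 = t ^ 2 + ∑ i, z i ^ 2 := by
  simpa using norm_consEquiv_sub_sq n t 0 z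

lemma volume_ball_inter_annulus_le_of_axis (n : ℕ) {c r δ : ℝ} (hr : 0 < r) (hr4 : r ≤ 1 / 4)
    (hδ : 0 < δ) (hδr : δ ≤ r) (hc : 1 - 2 * r < c) :
    volume (ball (c • EuclideanSpace.single 0 1 : EuclideanSpace ℝ (Fin (n + 1))) r ∩
      (ball 0 1 \ ball 0 (1 - δ))) ≤ ENNReal.ofReal (4 * δ * (2 * r) ^ n) := by
  set S := ball (c • EuclideanSpace.single 0 1 : EuclideanSpace ℝ (Fin (n + 1))) r ∩
      (ball 0 1 \ ball 0 (1 - δ))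
  have hS : MeasurableSet S := measurableSet_ball.inter (measurableSet_ball.diff measurableSet_ball)
  have hmem : ∀ t z, (t, z) ∈ consEquiv n ⁻¹' S → (t - c) ^ 2 + ∑ i, z i ^ 2 < r ^ 2 ∧
      (1 - δ) ^ 2 ≤ t ^ 2 + ∑ i, z i ^ 2 ∧ t ^ 2 + ∑ i, z i ^ 2 < 1 := by
    rintro t z ⟨hball, hlt, hge⟩
    rw [mem_ball, dist_eq_norm] at hball
    rw [mem_ball_zero_iff] at hlt
    rw [mem_ball_zero_iff, not_lt] at hge
    rw [← norm_consEquiv_sub_sq, ← norm_consEquiv_sq]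
    exact ⟨pow_lt_pow_left₀ hball (norm_nonneg _) two_ne_zero,
      pow_le_pow_left₀ (by linarith) hge 2, pow_lt_one₀ (norm_nonneg _) hlt two_ne_zero⟩
  rw [← (volume_preserving_consEquiv n).measure_preimage_equiv, Measure.volume_eq_prod]
  refine (measure_prod_le_of_fiber_le (L := ENNReal.ofReal (4 * δ))
    (hS.preimage (consEquiv n).measurable) (measurableSet_ball (x := (0 : Fin n → ℝ)) (ε := r))
    ?_ ?_).trans_eq ?_
  · rintro ⟨t, z⟩ hp
    have hz := (hmem t z hp).1
    refine mem_ball_zero_iff.2 ((pi_norm_lt_iff hr).2 fun i ↦ ?_)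
    have hi : z i ^ 2 ≤ ∑ j, z j ^ 2 :=
      Finset.single_le_sum (f := fun j ↦ z j ^ 2) (fun j _ ↦ sq_nonneg _) (Finset.mem_univ i)
    exact abs_lt_of_sq_lt_sq (by nlinarith [sq_nonneg (t - c)]) hr.le
  · intro z
    refine (Real.volume_le_diam _).trans (Metric.ediam_le fun t ht t' ht' ↦ ?_)
    obtain ⟨h1, h2, h3⟩ := hmem t z ht
    obtain ⟨h1', h2', h3'⟩ := hmem t' z ht'
    have hw : 0 ≤ ∑ i, z i ^ 2 := Finset.sum_nonneg fun i _ ↦ sq_nonneg _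
    have ht0 : 1 / 4 < t := by
      have := abs_lt_of_sq_lt_sq (by linarith : (t - c) ^ 2 < r ^ 2) hr.le
      linarith [neg_abs_le (t - c)]
    have ht0' : 1 / 4 < t' := by
      have := abs_lt_of_sq_lt_sq (by linarith : (t' - c) ^ 2 < r ^ 2) hr.le
      linarith [neg_abs_le (t' - c)]
    -- `t, t' > 1/4` while `t ^ 2 - t' ^ 2 < 1 - (1 - δ) ^ 2 ≤ 2 * δ`.
    rw [edist_dist, Real.dist_eq]
    refine ENNReal.ofReal_le_ofReal (abs_sub_le_iff.2 ⟨?_, ?_⟩) <;> nlinarith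
  · rw [Real.volume_pi_ball 0 hr, Fintype.card_fin, ← ENNReal.ofReal_mul (by positivity)]

lemma volume_ball_inter_annulus_eq_of_norm_eq {E : Type*} [NormedAddCommGroup E]
    [InnerProductSpace ℝ E] [FiniteDimensional ℝ E] [MeasurableSpace E] [BorelSpace E]
    {x x' : E} (h : ‖x‖ = ‖x'‖) (r a b : ℝ) :
    volume (ball x r ∩ (ball 0 a \ ball 0 b)) = volume (ball x' r ∩ (ball 0 a \ ball 0 b)) := by
  set T := (ℝ ∙ (x' - x))ᗮ.reflection
  have hT : T.symm x = x' := T.symm_apply_eq.2 (Submodule.reflection_sub h.symm).symm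
  rw [← T.measurePreserving.measure_preimage
    (measurableSet_ball.inter (measurableSet_ball.diff measurableSet_ball)).nullMeasurableSet]
  simp only [preimage_inter, preimage_sdiff, LinearIsometryEquiv.preimage_ball, hT, map_zero]

lemma addHaar_ball_sdiff_ball_le {E : Type*} [NormedAddCommGroup E] [NormedSpace ℝ E]
    [MeasurableSpace E] [BorelSpace E] [FiniteDimensional ℝ E] [Nontrivial E] (μ : Measure E)
    [μ.IsAddHaarMeasure] {δ : ℝ} (hδ : 0 ≤ δ) :
    μ (ball 0 1 \ ball 0 (1 - δ)) ≤ ENNReal.ofReal (Module.finrank ℝ E * δ) * μ (ball 0 1) := by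
  wlog hδ1 : δ ≤ 1 generalizing δ
  · calc μ (ball 0 1 \ ball 0 (1 - δ)) ≤ μ (ball 0 1 \ ball 0 (1 - 1)) :=
          (measure_mono sdiff_subset).trans_eq (by simp)
      _ ≤ ENNReal.ofReal (Module.finrank ℝ E * 1) * μ (ball 0 1) := this zero_le_one le_rfl
      _ ≤ ENNReal.ofReal (Module.finrank ℝ E * δ) * μ (ball 0 1) := by
          gcongr
          linarith
  set d := Module.finrank ℝ E
  have hbernoulli : 1 ≤ d * δ + (1 - δ) ^ d := by
    have := one_add_mul_le_pow (by linarith : (-2 : ℝ) ≤ -δ) d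
    rw [← sub_eq_add_neg] at this
    linarith
  rw [measure_sdiff (ball_subset_ball (by linarith)) measurableSet_ball.nullMeasurableSet
    measure_ball_lt_top.ne, Measure.addHaar_ball μ 0 (r := 1 - δ) (by linarith), tsub_le_iff_right,
    ← add_mul, ← ENNReal.ofReal_add (by positivity) (by positivity)]
  exact le_mul_of_one_le_left' (ENNReal.one_le_ofReal.2 hbernoulli)

lemma exists_volume_ball_inter_annulus_le (n : ℕ) :
    ∃ K : ℝ, 0 ≤ K ∧ ∀ (x : EuclideanSpace ℝ (Fin (n + 1))) (r δ : ℝ), 0 < r → 0 < δ → δ ≤ r →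
      volume (ball x r ∩ (ball 0 1 \ ball 0 (1 - δ))) ≤ ENNReal.ofReal (K * δ * r ^ n) := by
  set ω := (volume (ball (0 : EuclideanSpace ℝ (Fin (n + 1))) 1)).toReal with hω
  refine ⟨2 ^ (n + 2) + (n + 1) * 4 ^ n * ω, by positivity, fun x r δ hr hδ hδr ↦ ?_⟩
  rcases le_or_gt (‖x‖ + r) (1 - δ) with hfar | hnear
  · have : ball x r ∩ (ball 0 1 \ ball 0 (1 - δ)) = ∅ := by
      refine eq_empty_of_forall_notMem fun y ⟨hyx, _, hy⟩ ↦ hy ?_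
      rw [mem_ball_zero_iff]
      linarith [norm_le_norm_add_norm_sub' y x, mem_ball_iff_norm.1 hyx]
    simp [this]
  rcases le_or_gt r (1 / 4) with hsmall | hlarge
  · rw [volume_ball_inter_annulus_eq_of_norm_eq (x' := ‖x‖ • EuclideanSpace.single 0 1)
      (by simp [norm_smul])]
    refine (volume_ball_inter_annulus_le_of_axis n hr hsmall hδ hδr (by linarith)).trans
      (ENNReal.ofReal_le_ofReal ?_)
    calc 4 * δ * (2 * r) ^ n = 2 ^ (n + 2) * δ * r ^ n := by ring
      _ ≤ _ := by gcongr; exact le_add_of_nonneg_right (by positivity)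
  · have h4r : 1 ≤ 4 ^ n * r ^ n := by
      rw [← mul_pow]
      exact one_le_pow₀ (by linarith)
    refine (measure_mono inter_subset_right).trans
      ((addHaar_ball_sdiff_ball_le volume hδ.le).trans ?_)
    rw [finrank_euclideanSpace_fin, ← ENNReal.ofReal_toReal measure_ball_lt_top.ne,
      ← ENNReal.ofReal_mul (by positivity), ← hω]
    refine ENNReal.ofReal_le_ofReal ?_
    push_cast
    calc (n + 1) * δ * ω ≤ (n + 1) * δ * ω * (4 ^ n * r ^ n) :=
          le_mul_of_one_le_right (by positivity) h4r
      _ = (n + 1) * 4 ^ n * ω * δ * r ^ n := by ring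
      _ ≤ _ := by gcongr; exact le_add_of_nonneg_left (by positivity)

lemma exists_setLIntegral_one_sub_norm_rpow_le (n : ℕ) {γ : ℝ} (hγ1 : -1 < γ) (hγ0 : γ ≤ 0) :
    ∃ C : ℝ, 0 < C ∧ ∀ (x : EuclideanSpace ℝ (Fin (n + 1))) (r : ℝ), 0 < r →
      ∫⁻ y in ball x r ∩ ball 0 1, ENNReal.ofReal ((1 - ‖y‖) ^ γ) ≤
        ENNReal.ofReal (C * r ^ (((n + 1 : ℕ) : ℝ) + γ)) := by
  obtain ⟨K, hK0, hK⟩ := exists_volume_ball_inter_annulus_le n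
  set ω := (volume (ball (0 : EuclideanSpace ℝ (Fin (n + 1))) 1)).toReal
  have hω : 0 < ω := ENNReal.toReal_pos (measure_ball_pos _ _ one_pos).ne' measure_ball_lt_top.ne
  have hρ : (2 : ℝ) ^ (-(1 + γ)) < 1 := Real.rpow_lt_one_of_one_lt_of_neg one_lt_two (by linarith)
  set c : ℝ := 2 ^ (-γ) / (1 - 2 ^ (-(1 + γ)))
  have hc : 0 ≤ c := div_nonneg (by positivity) (by linarith)
  refine ⟨ω + K * c, by positivity, fun x r hr ↦ ?_⟩
  have hlevel (δ : ℝ) (hδ : 0 < δ) (hδr : δ ≤ r) :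
      volume (ball x r ∩ ball 0 1 ∩ {y | 1 - ‖y‖ ≤ δ}) ≤ ENNReal.ofReal (K * r ^ n * δ) := by
    refine (measure_mono ?_).trans ((hK x r δ hr hδ hδr).trans_eq (by ring_nf))
    rintro y ⟨⟨hyx, hy1⟩, hyδ⟩
    exact ⟨hyx, hy1, by rw [mem_ball_zero_iff, not_lt]; exact sub_le_comm.1 hyδ⟩
  have hvol : volume (ball x r ∩ ball 0 1) ≤ ENNReal.ofReal (r ^ (n + 1) * ω) := by
    refine (measure_mono inter_subset_left).trans_eq ?_
    rw [Measure.addHaar_ball _ _ hr.le, finrank_euclideanSpace_fin,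
      ENNReal.ofReal_mul (by positivity), ENNReal.ofReal_toReal measure_ball_lt_top.ne]
  refine (setLIntegral_rpow_le_of_measure_sublevel_le
    (measurableSet_ball.inter measurableSet_ball) (by fun_prop) hγ1 hγ0 hr (by positivity)
    (fun y hy ↦ sub_pos.2 (mem_ball_zero_iff.1 hy.2)) hlevel).trans ?_
  calc ENNReal.ofReal (r ^ γ) * volume (ball x r ∩ ball 0 1) +
        ENNReal.ofReal (K * r ^ n * r ^ (1 + γ) * c)
      ≤ ENNReal.ofReal (r ^ γ) * ENNReal.ofReal (r ^ (n + 1) * ω) +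
          ENNReal.ofReal (K * r ^ n * r ^ (1 + γ) * c) := by gcongr
    _ = ENNReal.ofReal ((ω + K * c) * r ^ (((n + 1 : ℕ) : ℝ) + γ)) := by
      rw [← ENNReal.ofReal_mul (by positivity),
        ← ENNReal.ofReal_add (by positivity) (by positivity), Real.rpow_add hr,
        Real.rpow_add hr, Real.rpow_natCast, Real.rpow_one]
      congr 1
      ring

/-- Let `N ≥ 3` and `γ ∈ (-1,0)`. There is `C > 0`, depending only on `N` and `γ`,
such that for every `x` in the closed unit ball of `ℝ^N` and every `r ∈ (0,2]`,
`∫_{B(x,r) ∩ B(0,1)} (1-|y|)^γ dy ≤ C r^(N+γ)`. -/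
theorem stmt7 (N : ℕ) (hN : 3 ≤ N) (γ : ℝ) (hγ1 : -1 < γ) (hγ0 : γ < 0) :
    ∃ C : ℝ, 0 < C ∧ ∀ x : EuclideanSpace ℝ (Fin N), ‖x‖ ≤ 1 →
      ∀ r : ℝ, 0 < r → r ≤ 2 →
      ∫ y in Metric.ball x r ∩ Metric.ball 0 1, (1 - ‖y‖) ^ γ ≤ C * r ^ ((N : ℝ) + γ) := by
  obtain ⟨n, rfl⟩ : ∃ n, N = n + 1 := ⟨N - 1, by omega⟩
  obtain ⟨C, hC, hbound⟩ := exists_setLIntegral_one_sub_norm_rpow_le n hγ1 hγ0.le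
  refine ⟨C, hC, fun x _ r hr _ ↦ ?_⟩
  have hnonneg : 0 ≤ᵐ[volume.restrict (ball x r ∩ ball 0 1)] fun y ↦ (1 - ‖y‖) ^ γ :=
    ae_restrict_of_forall_mem (measurableSet_ball.inter measurableSet_ball) fun y hy ↦
      Real.rpow_nonneg (sub_nonneg.2 (mem_ball_zero_iff.1 hy.2).le) γ
  rw [integral_eq_lintegral_of_nonneg_ae hnonneg
    (Measurable.aestronglyMeasurable (by fun_prop))]
  exact ENNReal.toReal_le_of_le_ofReal (by positivity) (hbound x r hr)
end
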